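/- In the dynamic network creation game in which players' communication cost uses the temporal shortest distance, for every real atomic cost α > 0 and every strategy profile s on n ≥ 2 players whose communication temporal graph is 𝒢[s] = (V, E, λ), the social cost satisfies c[s] ≥ 2n(n−1) + (α−2)|E|; moreover equality holds if 𝒢[s] has simple labelling and d_{𝒢[s]}(u,v) ≤ 2 for every ordered pair of distinct vertices u, v. -/

import Mathlib

open scoped ENNReal BigOperators

/-- A temporal path from `u` to `v`, given as a list of steps `(next vertex, time label)`.
The labelling `lab` gives, for each (ordered) pair of vertices, the set of time labels of the
edge joining them (empty if there is no edge); it is symmetric for temporal graphs arising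
from strategy profiles.  The conditions say that consecutive steps use time labels belonging
to the corresponding edge, that time labels strictly increase along the path, that no vertex is
repeated, and that the path ends at `v`. -/
def IsTemporalPath {V : Type*} (lab : V → V → Set ℕ) (u v : V) (p : List (V × ℕ)) : Prop :=
  List.Chain (fun a b => b.2 ∈ lab a.1 b.1) (u, 0) p ∧
  List.Chain' (· < ·) (p.map Prod.snd) ∧
  (u :: p.map Prod.fst).Nodup ∧
  (u :: p.map Prod.fst).getLast (List.cons_ne_nil _ _) = v

/-- The temporal shortest distance from `u` to `v`: the least number of edges of a temporal
path from `u` to `v` (`0` if `u = v`, `⊤` if there is no temporal path). -/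
noncomputable def temporalDist {V : Type*} (lab : V → V → Set ℕ) (u v : V) : ℕ∞ :=
  sInf {n : ℕ∞ | ∃ p : List (V × ℕ), IsTemporalPath lab u v p ∧ (p.length : ℕ∞) = n}

/-- The labelling of the communication temporal graph `𝒢[s]` of a strategy profile `s`:
`t` is a label of the edge `uv` iff `(u, t) ∈ s v` or `(v, t) ∈ s u`. -/
def profLab {V : Type*} (s : V → Finset (V × ℕ)) : V → V → Set ℕ :=
  fun u v => {t | (u, t) ∈ s v ∨ (v, t) ∈ s u}

/-- The (finite) set of time labels of the edge `uv` in the communication temporal graph. -/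
def labelFinset {V : Type*} [DecidableEq V] (s : V → Finset (V × ℕ)) (u v : V) : Finset ℕ :=
  (((s v).filter (fun p => p.1 = u)).image Prod.snd) ∪
    (((s u).filter (fun p => p.1 = v)).image Prod.snd)

/-- The total number of time labels `∑ e ∈ E, |λ(e)|` of the communication temporal graph
(each unordered pair is counted once, whence the division by `2`). -/
def numLabels {V : Type*} [Fintype V] [DecidableEq V] (s : V → Finset (V × ℕ)) : ℕ :=
  (∑ u : V, ∑ v : V, if u = v then 0 else (labelFinset s u v).card) / 2

/-- The number of edges `|E|` of the communication temporal graph. -/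
def numEdges {V : Type*} [Fintype V] [DecidableEq V] (s : V → Finset (V × ℕ)) : ℕ :=
  ((Finset.univ : Finset (V × V)).filter
    (fun q => q.1 ≠ q.2 ∧ (labelFinset s q.1 q.2).Nonempty)).card / 2

/-- The social cost `c[s] = α·∑_{e ∈ E} |λ(e)| + ∑_{(u,v) ∈ V×V} d_{𝒢[s]}(u,v)`
of a strategy profile `s` for atomic cost `α`. -/
noncomputable def socialCost {V : Type*} [Fintype V] [DecidableEq V]
    (α : ℝ) (s : V → Finset (V × ℕ)) : ℝ≥0∞ :=
  ENNReal.ofReal α * (numLabels s : ℝ≥0∞) +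
    ∑ u : V, ∑ v : V, (temporalDist (profLab s) u v : ℝ≥0∞)

/-- The individual cost `c[s](v) = α·|s(v)| + ∑_{w ∈ V} d_{𝒢[s]}(v,w)` of player `v`. -/
noncomputable def indivCost {V : Type*} [Fintype V]
    (α : ℝ) (s : V → Finset (V × ℕ)) (v : V) : ℝ≥0∞ :=
  ENNReal.ofReal α * ((s v).card : ℝ≥0∞) +
    ∑ w : V, (temporalDist (profLab s) v w : ℝ≥0∞)

/-- A strategy profile is a Nash equilibrium if no player can strictly decrease its individual
cost by changing only its own strategy. -/
def IsNash {V : Type*} [Fintype V] [DecidableEq V] (α : ℝ) (s : V → Finset (V × ℕ)) : Prop :=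
  ∀ (v : V) (t : Finset (V × ℕ)),
    ¬ indivCost α (Function.update s v t) v < indivCost α s v

/-- The optimal social cost `c*(α, n)`: the minimum social cost over all strategy profiles
with `n` players and atomic cost `α`. -/
noncomputable def optCost (α : ℝ) (n : ℕ) : ℝ≥0∞ :=
  ⨅ s : Fin n → Finset (Fin n × ℕ), socialCost α s

/-- The price of anarchy `PoA(α, n)`: the maximum social cost of a Nash equilibrium with `n`
players and atomic cost `α`, divided by the optimal social cost `c*(α, n)`. -/
noncomputable def PoA (α : ℝ) (n : ℕ) : ℝ≥0∞ :=
  (⨆ s : {s : Fin n → Finset (Fin n × ℕ) // IsNash α s}, socialCost α s.1) / optCost α n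

/-- The price of stability `PoS(α, n)`: the minimum social cost of a Nash equilibrium with `n`
players and atomic cost `α`, divided by the optimal social cost `c*(α, n)`. -/
noncomputable def PoS (α : ℝ) (n : ℕ) : ℝ≥0∞ :=
  (⨅ s : {s : Fin n → Finset (Fin n × ℕ) // IsNash α s}, socialCost α s.1) / optCost α n

/-!
A temporal path between distinct vertices has at least one edge, and at least two unless the
vertices are adjacent. Summed over ordered pairs, the distance part of the social cost is
therefore at least `2n(n-1) - 2|E|`, while every edge carries at least one label, so
`c[s] ≥ α|E| + 2n(n-1) - 2|E|`. Simple labelling and temporal diameter at most `2` make both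
estimates exact.
-/

open Finset

section TemporalDist

variable {V : Type*} (lab : V → V → Set ℕ)

lemma temporalDist_self (u : V) : temporalDist lab u u = 0 :=
  le_antisymm (sInf_le ⟨[], ⟨.singleton _, .nil, by simp, rfl⟩, by simp⟩) zero_le

variable {lab} {u v : V}

lemma one_le_temporalDist (h : u ≠ v) : 1 ≤ temporalDist lab u v := by
  refine le_sInf ?_
  rintro m ⟨p, hp, rfl⟩
  cases p with
  | nil => exact absurd hp.2.2.2 (by simpa using h)
  | cons _ l => exact_mod_cast l.length.succ_pos

lemma two_le_temporalDist (h : u ≠ v) (hlab : lab u v = ∅) : 2 ≤ temporalDist lab u v := by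
  refine le_sInf ?_
  rintro m ⟨p, hp, rfl⟩
  match p, hp with
  | [], hp => exact absurd hp.2.2.2 (by simpa using h)
  | [a], ⟨hchain, _, _, hlast⟩ =>
    obtain rfl : a.1 = v := by simpa using hlast
    have ha : a.2 ∈ lab u a.1 := (List.isChain_cons_cons.mp hchain).1
    simp [hlab] at ha
  | _ :: _ :: l, _ => exact_mod_cast Nat.le_add_left 2 l.length

lemma temporalDist_le_one (h : u ≠ v) (hlab : (lab u v).Nonempty) :
    temporalDist lab u v ≤ 1 := by
  obtain ⟨t, ht⟩ := hlab
  refine sInf_le ⟨[(v, t)], ⟨.cons_cons ht (.singleton _), .singleton _,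
    by simp [h], by simp⟩, by simp⟩

end TemporalDist

section DistLowerBound

variable {V : Type*} (G : SimpleGraph V) [DecidableRel G.Adj]

lemma sum_sum_ite_adj [Fintype V] :
    ∑ u, ∑ v, (if G.Adj u v then 1 else 0) = 2 * #G.edgeFinset := by
  simp only [sum_boole, Nat.cast_id, ← G.sum_degrees_eq_twice_card_edges,
    ← G.card_neighborFinset_eq_degree, G.neighborFinset_eq_filter]

variable [DecidableEq V]

def distLowerBound (u v : V) : ℕ :=
  if u = v then 0 else if G.Adj u v then 1 else 2

lemma sum_distLowerBound_add_two_mul_card_edgeFinset [Fintype V] :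
    ∑ u, ∑ v, distLowerBound G u v + 2 * #G.edgeFinset =
      2 * (Fintype.card V * (Fintype.card V - 1)) := by
  have hpair (u v : V) :
      distLowerBound G u v + (if G.Adj u v then 1 else 0) = if u = v then 0 else 2 := by
    unfold distLowerBound
    by_cases huv : u = v
    · simp [huv]
    · by_cases hadj : G.Adj u v <;> simp [huv, hadj]
  rw [← sum_sum_ite_adj, ← sum_add_distrib]
  simp_rw [← sum_add_distrib, hpair]
  simp only [sum_ite, sum_const_zero, zero_add, sum_const, smul_eq_mul, filter_ne, mem_univ,
    card_erase_of_mem, card_univ]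
  ring

lemma ofReal_eq_add_sum_distLowerBound [Fintype V] {α : ℝ} (hα : 0 ≤ α) :
    ENNReal.ofReal (2 * (Fintype.card V : ℝ) * ((Fintype.card V : ℝ) - 1) +
        (α - 2) * (#G.edgeFinset : ℝ)) =
      ENNReal.ofReal α * (#G.edgeFinset : ℝ≥0∞) +
        ((∑ u, ∑ v, distLowerBound G u v : ℕ) : ℝ≥0∞) := by
  set N := Fintype.card V
  set S := ∑ u, ∑ v, distLowerBound G u v
  have hsum : (S : ℝ) + 2 * #G.edgeFinset = 2 * (N * (N - 1 : ℝ)) := by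
    have hpred : ((N * (N - 1) : ℕ) : ℝ) = N * (N - 1 : ℝ) := by
      rcases N with _ | N <;> simp
    rw [← hpred]
    exact_mod_cast sum_distLowerBound_add_two_mul_card_edgeFinset G
  rw [show 2 * (N : ℝ) * (N - 1) + (α - 2) * #G.edgeFinset = α * #G.edgeFinset + S by linarith,
    ENNReal.ofReal_add (by positivity) (by positivity), ENNReal.ofReal_mul hα,
    ENNReal.ofReal_natCast, ENNReal.ofReal_natCast]

end DistLowerBound

section CommGraph

variable {V : Type*} [DecidableEq V] (s : V → Finset (V × ℕ))

lemma coe_labelFinset (u v : V) : (labelFinset s u v : Set ℕ) = profLab s u v := by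
  ext t
  simp [labelFinset, profLab]

lemma labelFinset_comm (u v : V) : labelFinset s u v = labelFinset s v u :=
  union_comm _ _

def commGraph : SimpleGraph V where
  Adj u v := u ≠ v ∧ (labelFinset s u v).Nonempty
  symm := ⟨fun u v h => ⟨h.1.symm, labelFinset_comm s u v ▸ h.2⟩⟩
  loopless := ⟨fun _ h => h.1 rfl⟩

instance : DecidableRel (commGraph s).Adj := fun u v =>
  inferInstanceAs (Decidable (u ≠ v ∧ (labelFinset s u v).Nonempty))

variable {s}

lemma commGraph_adj {u v : V} :
    (commGraph s).Adj u v ↔ u ≠ v ∧ (labelFinset s u v).Nonempty :=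
  Iff.rfl

lemma distLowerBound_commGraph_le_temporalDist (u v : V) :
    (distLowerBound (commGraph s) u v : ℕ∞) ≤ temporalDist (profLab s) u v := by
  unfold distLowerBound
  split_ifs with huv hadj
  · simp
  · exact_mod_cast one_le_temporalDist huv
  · refine two_le_temporalDist huv ?_
    rw [← coe_labelFinset, coe_eq_empty, ← not_nonempty_iff_eq_empty]
    exact fun hne => hadj ⟨huv, hne⟩

lemma temporalDist_eq_distLowerBound_commGraph {u v : V}
    (hdiam : u ≠ v → temporalDist (profLab s) u v ≤ 2) :
    temporalDist (profLab s) u v = distLowerBound (commGraph s) u v := by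
  refine le_antisymm ?_ (distLowerBound_commGraph_le_temporalDist u v)
  unfold distLowerBound
  split_ifs with huv hadj
  · simp [huv, temporalDist_self]
  · exact_mod_cast temporalDist_le_one huv (by simpa [← coe_labelFinset] using hadj.2)
  · exact_mod_cast hdiam huv

lemma ite_adj_commGraph_le (u v : V) :
    (if (commGraph s).Adj u v then 1 else 0) ≤ if u = v then 0 else #(labelFinset s u v) := by
  split_ifs with hadj huv
  · exact absurd huv hadj.1
  · exact hadj.2.card_pos
  all_goals omega

lemma ite_adj_commGraph_eq {u v : V} (hsimple : u ≠ v → #(labelFinset s u v) ≤ 1) :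
    (if (commGraph s).Adj u v then 1 else 0) = if u = v then 0 else #(labelFinset s u v) := by
  refine le_antisymm (ite_adj_commGraph_le u v) ?_
  split_ifs with huv hadj hadj
  · exact zero_le_one
  · exact le_rfl
  · exact hsimple huv
  · simpa [commGraph_adj, huv] using hadj

variable [Fintype V]

lemma numEdges_eq_card_edgeFinset : numEdges s = #(commGraph s).edgeFinset := by
  rw [numEdges, ← Nat.mul_div_cancel_left #(commGraph s).edgeFinset two_pos,
    (commGraph s).two_mul_card_edgeFinset]
  rfl

lemma numEdges_le_numLabels : numEdges s ≤ numLabels s := by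
  calc numEdges s = 2 * #(commGraph s).edgeFinset / 2 := by
        rw [numEdges_eq_card_edgeFinset, Nat.mul_div_cancel_left _ two_pos]
    _ ≤ numLabels s := by
      rw [← sum_sum_ite_adj]
      exact Nat.div_le_div_right <|
        sum_le_sum fun u _ => sum_le_sum fun v _ => ite_adj_commGraph_le u v

lemma numLabels_eq_numEdges (hsimple : ∀ u v : V, u ≠ v → #(labelFinset s u v) ≤ 1) :
    numLabels s = numEdges s := by
  calc numLabels s = (∑ u, ∑ v, if (commGraph s).Adj u v then 1 else 0) / 2 := by
        simp_rw [numLabels, ite_adj_commGraph_eq (hsimple _ _)]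
    _ = numEdges s := by
      rw [sum_sum_ite_adj, Nat.mul_div_cancel_left _ two_pos, numEdges_eq_card_edgeFinset]

end CommGraph

theorem statement_5_general (α : ℝ) (hα : 0 < α) (n : ℕ)
    (s : Fin n → Finset (Fin n × ℕ)) :
    ENNReal.ofReal (2 * (n : ℝ) * ((n : ℝ) - 1) + (α - 2) * (numEdges s : ℝ)) ≤
        socialCost α s ∧
      (((∀ u v : Fin n, u ≠ v → (labelFinset s u v).card ≤ 1) ∧
          ∀ u v : Fin n, u ≠ v → temporalDist (profLab s) u v ≤ 2) →
        socialCost α s =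
          ENNReal.ofReal (2 * (n : ℝ) * ((n : ℝ) - 1) + (α - 2) * (numEdges s : ℝ))) := by
  have hbound := ofReal_eq_add_sum_distLowerBound (commGraph s) hα.le
  rw [Fintype.card_fin, ← numEdges_eq_card_edgeFinset] at hbound
  rw [hbound, socialCost]
  push_cast
  refine ⟨?_, fun ⟨hsimple, hdiam⟩ => ?_⟩
  · gcongr with u _ v _
    · exact numEdges_le_numLabels
    · exact_mod_cast distLowerBound_commGraph_le_temporalDist u v
  · rw [numLabels_eq_numEdges hsimple]
    congr 1
    refine sum_congr rfl fun u _ => sum_congr rfl fun v _ => ?_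
    rw [temporalDist_eq_distLowerBound_commGraph (hdiam u v), ENat.toENNReal_coe]

/-- For every atomic cost `α > 0` and every strategy profile `s` on `n ≥ 2` players, the
social cost satisfies `c[s] ≥ 2n(n-1) + (α-2)|E|`; moreover equality holds if the
communication temporal graph of `s` has simple labelling and the temporal shortest distance
between every ordered pair of distinct vertices is at most `2`. -/
theorem statement_5 (α : ℝ) (hα : 0 < α) (n : ℕ) (hn : 2 ≤ n)
    (s : Fin n → Finset (Fin n × ℕ)) :
    ENNReal.ofReal (2 * (n : ℝ) * ((n : ℝ) - 1) + (α - 2) * (numEdges s : ℝ)) ≤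
        socialCost α s ∧
      (((∀ u v : Fin n, u ≠ v → (labelFinset s u v).card ≤ 1) ∧
          ∀ u v : Fin n, u ≠ v → temporalDist (profLab s) u v ≤ 2) →
        socialCost α s =
          ENNReal.ofReal (2 * (n : ℝ) * ((n : ℝ) - 1) + (α - 2) * (numEdges s : ℝ))) :=
  statement_5_general α hα n s
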